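/- arXiv:2406.16579 — 3 statements merged into one kernel-verified Lean document; each statement's English description precedes it below -/
import Mathlib

section
/- With f as the map f(x) = x + 1/4 on [0,1/2], f(x) = 5/4 - x on (1/2,1], and partitions P = {[0,1/2], (1/2,1]} and β = {(0,1), {0}, {1}}, the joint partitions satisfy card(P ∨ f^{-1}(P)) = 4 and card(β ∨ f^{-1}(β)) = 3; in particular card(P ∨ f^{-1}(P)) > card(β ∨ f^{-1}(β)), even though {0} ⊆ [0,1/2], {1} ⊆ (1/2,1] and {0} ∩ {1} = ∅. -/
open Set

/-- The shifted tent-like map: `f(x) = x + 1/4` on `[0, 1/2]`, `f(x) = 5/4 - x` on `(1/2, 1]`. -/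
noncomputable def tentf (x : ℝ) : ℝ := if x ≤ 1 / 2 then x + 1 / 4 else 5 / 4 - x

/-- The family of preimages (within `[0,1]`) of the members of a family `𝒜`. -/
noncomputable def preFam (𝒜 : Set (Set ℝ)) : Set (Set ℝ) :=
  (fun s => tentf ⁻¹' s ∩ Icc 0 1) '' 𝒜

/-- The join of two families: all nonempty pairwise intersections. -/
def joinFam (𝒜 ℬ : Set (Set ℝ)) : Set (Set ℝ) :=
  {s | s.Nonempty ∧ ∃ a ∈ 𝒜, ∃ b ∈ ℬ, s = a ∩ b}

lemma pre1 : tentf ⁻¹' Icc 0 (1/2) ∩ Icc 0 1 = Icc (0:ℝ) (1/4) ∪ Icc (3/4) 1 := by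
  ext x
  simp only [tentf, mem_inter_iff, mem_preimage, mem_Icc, mem_union]
  split_ifs with h <;> constructor <;> intro hx
  · left; constructor <;> linarith [hx.1.1, hx.1.2, hx.2.1]
  · rcases hx with h1 | h1 <;> constructor <;> constructor <;> linarith [h1.1, h1.2]
  · right; constructor <;> linarith [hx.1.1, hx.1.2, hx.2.2]
  · rcases hx with h1 | h1 <;> [skip; skip] <;> first
      | (exfalso; linarith [h1.1, h1.2])
      | (constructor <;> constructor <;> linarith [h1.1, h1.2])

lemma pre2 : tentf ⁻¹' Ioc (1/2) 1 ∩ Icc 0 1 = Ioo (1/4:ℝ) (3/4) := by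
  ext x
  simp only [tentf, mem_inter_iff, mem_preimage, mem_Ioc, mem_Icc, mem_Ioo]
  split_ifs with h <;> constructor <;> intro hx
  · constructor <;> linarith [hx.1.1, hx.1.2, hx.2.1]
  · constructor; constructor <;> linarith [hx.1, hx.2]
    constructor <;> linarith [hx.1, hx.2]
  · constructor <;> linarith [hx.1.1, hx.1.2, hx.2.2]
  · constructor; constructor <;> linarith [hx.1, hx.2]
    constructor <;> linarith [hx.1, hx.2]

lemma pre3 : tentf ⁻¹' Ioo 0 1 ∩ Icc 0 1 = Icc (0:ℝ) 1 := by
  ext x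
  simp only [tentf, mem_inter_iff, mem_preimage, mem_Ioo, mem_Icc]
  split_ifs with h <;> constructor <;> intro hx
  · exact hx.2
  · exact ⟨⟨by linarith [hx.1], by linarith [hx.1]⟩, hx⟩
  · exact hx.2
  · exact ⟨⟨by linarith [hx.2], by linarith [hx.2]⟩, hx⟩

lemma pre4 : tentf ⁻¹' {(0:ℝ)} ∩ Icc 0 1 = ∅ := by
  ext x
  simp only [tentf, mem_inter_iff, mem_preimage, mem_singleton_iff, mem_Icc, mem_empty_iff_false,
    iff_false, not_and]
  split_ifs with h <;> intro hx hy <;> intro hz <;> linarith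

lemma pre5 : tentf ⁻¹' {(1:ℝ)} ∩ Icc 0 1 = ∅ := by
  ext x
  simp only [tentf, mem_inter_iff, mem_preimage, mem_singleton_iff, mem_Icc, mem_empty_iff_false,
    iff_false, not_and]
  split_ifs with h <;> intro hx hy <;> intro hz <;> linarith

lemma int1 : Icc (0:ℝ) (1/2) ∩ (Icc 0 (1/4) ∪ Icc (3/4) 1) = Icc 0 (1/4) := by
  ext x; simp only [mem_inter_iff, mem_union, mem_Icc]
  constructor
  · rintro ⟨h1, h2 | h2⟩ ; exact h2 ; exact absurd h1.2 (by linarith [h2.1])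
  · intro h; exact ⟨⟨h.1, by linarith [h.2]⟩, Or.inl h⟩

lemma int2 : Icc (0:ℝ) (1/2) ∩ Ioo (1/4) (3/4) = Ioc (1/4) (1/2) := by
  ext x; simp only [mem_inter_iff, mem_Icc, mem_Ioo, mem_Ioc]
  constructor
  · rintro ⟨h1, h2⟩; exact ⟨h2.1, h1.2⟩
  · intro h; exact ⟨⟨by linarith [h.1], h.2⟩, h.1, by linarith [h.2]⟩

lemma int3 : Ioc (1/2:ℝ) 1 ∩ (Icc 0 (1/4) ∪ Icc (3/4) 1) = Icc (3/4) 1 := by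
  ext x; simp only [mem_inter_iff, mem_union, mem_Icc, mem_Ioc]
  constructor
  · rintro ⟨h1, h2 | h2⟩ ; exact absurd h1.1 (by linarith [h2.2]) ; exact h2
  · intro h; exact ⟨⟨by linarith [h.1], h.2⟩, Or.inr h⟩

lemma int4 : Ioc (1/2:ℝ) 1 ∩ Ioo (1/4) (3/4) = Ioo (1/2) (3/4) := by
  ext x; simp only [mem_inter_iff, mem_Ioc, mem_Ioo]
  constructor
  · rintro ⟨h1, h2⟩; exact ⟨h1.1, h2.2⟩
  · intro h; exact ⟨⟨h.1, by linarith [h.2]⟩, by linarith [h.1], h.2⟩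

lemma preFamP : preFam {Icc 0 (1/2), Ioc (1/2) 1} =
    {Icc (0:ℝ) (1/4) ∪ Icc (3/4) 1, Ioo (1/4) (3/4)} := by
  unfold preFam
  rw [image_insert_eq, image_singleton]
  rw [pre1, pre2]

lemma joinP : joinFam {Icc 0 (1/2), Ioc (1/2) 1} (preFam {Icc 0 (1/2), Ioc (1/2) 1}) =
    {Icc (0:ℝ) (1/4), Ioc (1/4) (1/2), Icc (3/4) 1, Ioo (1/2) (3/4)} := by
  rw [preFamP]
  ext s
  simp only [joinFam, mem_setOf_eq, mem_insert_iff, mem_singleton_iff]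
  constructor
  · rintro ⟨hne, a, (rfl | rfl), b, (rfl | rfl), rfl⟩
    · rw [int1]; tauto
    · rw [int2]; tauto
    · rw [int3]; tauto
    · rw [int4]; tauto
  · rintro (rfl | rfl | rfl | rfl)
    · exact ⟨⟨0, by norm_num⟩, _, Or.inl rfl, _, Or.inl rfl, int1.symm⟩
    · exact ⟨⟨1/2, by norm_num⟩, _, Or.inl rfl, _, Or.inr rfl, int2.symm⟩
    · exact ⟨⟨1, by norm_num⟩, _, Or.inr rfl, _, Or.inl rfl, int3.symm⟩
    · exact ⟨⟨0.6, by norm_num⟩, _, Or.inr rfl, _, Or.inr rfl, int4.symm⟩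

lemma preFamB : preFam {Ioo 0 1, {0}, {1}} = {Icc (0:ℝ) 1, ∅} := by
  unfold preFam
  rw [image_insert_eq, image_insert_eq, image_singleton]
  rw [pre3, pre4, pre5]
  ext s; simp

lemma int5 : Ioo (0:ℝ) 1 ∩ Icc 0 1 = Ioo 0 1 :=
  inter_eq_left.2 Ioo_subset_Icc_self

lemma int6 : ({0} : Set ℝ) ∩ Icc 0 1 = {0} :=
  inter_eq_left.2 (by simp)

lemma int7 : ({1} : Set ℝ) ∩ Icc 0 1 = {1} :=
  inter_eq_left.2 (by simp)

lemma joinB : joinFam {Ioo 0 1, {0}, {1}} (preFam {Ioo 0 1, {0}, {1}}) =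
    {Ioo (0:ℝ) 1, {0}, {1}} := by
  rw [preFamB]
  ext s
  simp only [joinFam, mem_setOf_eq, mem_insert_iff, mem_singleton_iff]
  constructor
  · rintro ⟨hne, a, (rfl | rfl | rfl), b, (rfl | rfl), rfl⟩
    · rw [int5]; tauto
    · exact absurd hne (by simp)
    · rw [int6]; tauto
    · exact absurd hne (by simp)
    · rw [int7]; tauto
    · exact absurd hne (by simp)
  · rintro (rfl | rfl | rfl)
    · exact ⟨⟨1/2, by norm_num⟩, _, Or.inl rfl, _, Or.inl rfl, int5.symm⟩
    · exact ⟨⟨0, rfl⟩, _, Or.inr (Or.inl rfl), _, Or.inl rfl, int6.symm⟩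
    · exact ⟨⟨1, rfl⟩, _, Or.inr (Or.inr rfl), _, Or.inl rfl, int7.symm⟩

lemma cardP : Nat.card (joinFam {Icc 0 (1/2), Ioc (1/2) 1} (preFam {Icc 0 (1/2), Ioc (1/2) 1})) = 4 := by
  rw [joinP, Nat.card_coe_set_eq]
  have hAB : Icc (0:ℝ) (1/4) ≠ Ioc (1/4) (1/2) := by
    intro h
    have : (0:ℝ) ∈ Ioc (1/4:ℝ) (1/2) := h ▸ (by norm_num)
    norm_num [mem_Ioc] at this
  have hAC : Icc (0:ℝ) (1/4) ≠ Icc (3/4) 1 := by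
    intro h
    have : (0:ℝ) ∈ Icc (3/4:ℝ) 1 := h ▸ (by norm_num)
    norm_num [mem_Icc] at this
  have hAD : Icc (0:ℝ) (1/4) ≠ Ioo (1/2) (3/4) := by
    intro h
    have : (0:ℝ) ∈ Ioo (1/2:ℝ) (3/4) := h ▸ (by norm_num)
    norm_num [mem_Ioo] at this
  have hBC : Ioc (1/4:ℝ) (1/2) ≠ Icc (3/4) 1 := by
    intro h
    have : (1/2:ℝ) ∈ Icc (3/4:ℝ) 1 := h ▸ (by norm_num)
    norm_num [mem_Icc] at this
  have hBD : Ioc (1/4:ℝ) (1/2) ≠ Ioo (1/2) (3/4) := by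
    intro h
    have : (1/2:ℝ) ∈ Ioo (1/2:ℝ) (3/4) := h ▸ (by norm_num)
    norm_num [mem_Ioo] at this
  have hCD : Icc (3/4:ℝ) 1 ≠ Ioo (1/2) (3/4) := by
    intro h
    have : (1:ℝ) ∈ Ioo (1/2:ℝ) (3/4) := h ▸ (by norm_num)
    norm_num [mem_Ioo] at this
  rw [Set.ncard_insert_of_notMem (by simp only [mem_insert_iff, mem_singleton_iff]; push_neg; exact ⟨hAB, hAC, hAD⟩),
      Set.ncard_insert_of_notMem (by simp only [mem_insert_iff, mem_singleton_iff]; push_neg; exact ⟨hBC, hBD⟩),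
      Set.ncard_pair hCD]

lemma cardB : Nat.card (joinFam {Ioo 0 1, {0}, {1}} (preFam {Ioo 0 1, {0}, {1}})) = 3 := by
  rw [joinB, Nat.card_coe_set_eq]
  have h1 : Ioo (0:ℝ) 1 ≠ {0} := by
    intro h
    have : (1/2:ℝ) ∈ ({0} : Set ℝ) := h ▸ (by norm_num)
    norm_num at this
  have h2 : Ioo (0:ℝ) 1 ≠ {1} := by
    intro h
    have : (1/2:ℝ) ∈ ({1} : Set ℝ) := h ▸ (by norm_num)
    norm_num at this
  have h3 : ({0} : Set ℝ) ≠ {1} := by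
    intro h
    have : (0:ℝ) ∈ ({1} : Set ℝ) := h ▸ rfl
    norm_num at this
  rw [Set.ncard_insert_of_notMem (by simp only [mem_insert_iff, mem_singleton_iff]; push_neg; exact ⟨h1, h2⟩), Set.ncard_pair h3]

/-- The counterexample to inequality (10) of Vivas–Sirvent: with
`P = {[0,1/2], (1/2,1]}` and `β = {(0,1), {0}, {1}}`, one has
`card (P ∨ f⁻¹P) = 4 > 3 = card (β ∨ f⁻¹β)`, even though `{0} ⊆ [0,1/2]`,
`{1} ⊆ (1/2,1]` and `{0} ∩ {1} = ∅`. -/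
theorem card_join_counterexample :
    ({(0 : ℝ)} : Set ℝ) ⊆ Icc 0 (1 / 2) ∧ ({(1 : ℝ)} : Set ℝ) ⊆ Ioc (1 / 2) 1 ∧
    ({(0 : ℝ)} ∩ {(1 : ℝ)} : Set ℝ) = ∅ ∧
    Nat.card (joinFam {Icc 0 (1 / 2), Ioc (1 / 2) 1}
      (preFam {Icc 0 (1 / 2), Ioc (1 / 2) 1})) = 4 ∧
    Nat.card (joinFam {Ioo 0 1, {0}, {1}} (preFam {Ioo 0 1, {0}, {1}})) = 3 ∧
    Nat.card (joinFam {Ioo 0 1, {0}, {1}} (preFam {Ioo 0 1, {0}, {1}})) <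
      Nat.card (joinFam {Icc 0 (1 / 2), Ioc (1 / 2) 1}
        (preFam {Icc 0 (1 / 2), Ioc (1 / 2) 1})) := by
  refine ⟨by norm_num, by norm_num, ?_, cardP, cardB, by rw [cardP, cardB]; norm_num⟩
  ext x; simp only [mem_inter_iff, mem_singleton_iff, mem_empty_iff_false, iff_false, not_and]
  rintro rfl; norm_num
end

section
/- Let D = {x ∈ ℝ² : ‖x‖ ≤ 1} be the closed unit disc and S¹ = ∂D. Define φ : D → K(ℝ²) by φ(x) = S¹ \ {y ∈ ℝ² : ‖y − x/‖x‖‖ < ‖x‖} for x ≠ 0 and φ(0) = S¹. Then φ admits no single-valued continuous selection f with f(x) ∈ φ(x) for all x ∈ D. -/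
open Metric Classical

/-- The multivalued map on the closed unit disc `D ⊆ ℝ²`:
`φ(x) = S¹ \ {y : ‖y - x/‖x‖‖ < ‖x‖}` for `x ≠ 0` and `φ(0) = S¹`. -/
noncomputable def phiDisc (x : EuclideanSpace ℝ (Fin 2)) : Set (EuclideanSpace ℝ (Fin 2)) :=
  if x = 0 then sphere (0 : EuclideanSpace ℝ (Fin 2)) 1
  else sphere (0 : EuclideanSpace ℝ (Fin 2)) 1 \ {y | ‖y - ‖x‖⁻¹ • x‖ < ‖x‖}

/-!
Since `x ∉ φ(x)` for every `x`, a continuous selection of `φ` would be a continuous map from the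
closed disc to the unit circle without fixed points, contradicting Brouwer's theorem in dimension
two. That theorem is proved with complex logarithms: if `f` has no fixed point, `z - f z` has a
continuous logarithm on the disc, which is simply connected. On the unit circle
`z - f z = z * (1 - f z * conj z)` and the second factor has positive real part, so subtracting
its principal logarithm leaves a continuous logarithm of the identity on the circle, which cannot
exist since it would have to increase by `2πi` once around.
-/

open Set

section

open Complex Real ComplexConjugate
open scoped ComplexOrder

theorem Convex.exists_continuousOn_exp_eq {E : Type*} [AddCommGroup E] [Module ℝ E]
    [TopologicalSpace E] [IsTopologicalAddGroup E] [ContinuousSMul ℝ E] [LocallyConvexSpace ℝ E]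
    {s : Set E} (hs : Convex ℝ s) {g : E → ℂ} (hg : ContinuousOn g s) (hg₀ : ∀ x ∈ s, g x ≠ 0) :
    ∃ θ : E → ℂ, ContinuousOn θ s ∧ ∀ x ∈ s, exp (θ x) = g x := by
  rcases s.eq_empty_or_nonempty with rfl | ⟨x₀, hx₀⟩
  · exact ⟨g, continuousOn_empty g, fun x hx => hx.elim⟩
  have := hs.contractibleSpace ⟨x₀, hx₀⟩
  have := hs.locallyPathConnectedSpace
  obtain ⟨θ, ⟨-, hθ⟩, -⟩ := isCoveringMapOn_exp.existsUnique_continuousMap_lifts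
    ⟨s.domRestrict g, hg.domRestrict⟩ (a₀ := ⟨x₀, hx₀⟩) (exp_log (hg₀ x₀ hx₀)) fun x => hg₀ x x.2
  refine ⟨fun x => if hx : x ∈ s then θ ⟨x, hx⟩ else 0, ?_, fun x hx => ?_⟩
  · rw [continuousOn_iff_continuous_domRestrict]
    convert θ.continuous with x
    simp
  · simpa [hx] using congr_fun hθ ⟨x, hx⟩

theorem Complex.not_exists_continuousOn_exp_eq_id_sphere {r : ℝ} (hr : 0 < r) :
    ¬ ∃ L : ℂ → ℂ, ContinuousOn L (sphere 0 r) ∧ ∀ z ∈ sphere 0 r, exp (L z) = z := by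
  rintro ⟨L, hL, hexp⟩
  set γ : ℝ → ℂ := fun s => r * exp (s * I)
  have hγ : ∀ s, γ s ∈ sphere 0 r := fun s => by
    simp [γ, norm_exp_ofReal_mul_I, abs_of_pos hr]
  have hγ0 : γ 0 = r := by simp [γ]
  have hlift : (fun s => L (γ s)) = fun s : ℝ => L r + s * I := by
    refine isCoveringMap_exp.eq_of_comp_eq
      (hL.comp_continuous (by fun_prop) hγ) (by fun_prop) ?_ 0 (by simp [hγ0])
    funext s
    simp only [Function.comp_apply, Subtype.mk.injEq, exp_add, hexp _ (hγ s)]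
    rw [← hγ0, hexp _ (hγ 0), hγ0]
  have h2π := congr_fun hlift (2 * π)
  rw [show γ (2 * π) = r by simp [γ, exp_two_pi_mul_I]] at h2π
  simp [pi_ne_zero] at h2π

theorem Complex.re_lt_one_of_norm_le_one {w : ℂ} (hw : ‖w‖ ≤ 1) (hw₁ : w ≠ 1) : w.re < 1 := by
  by_contra! hre
  have hnorm : w.re = ‖w‖ := le_antisymm (re_le_norm w) (hw.trans hre)
  have hw₀ : 0 ≤ w := re_eq_norm.1 hnorm
  refine hw₁ (ext ?_ ?_)
  · simpa using le_antisymm (hnorm ▸ hw) hre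
  · simpa using (nonneg_iff.1 hw₀).2.symm

theorem Complex.exists_fixedPoint_of_mapsTo_closedBall {f : ℂ → ℂ}
    (hf : ContinuousOn f (closedBall 0 1)) (hfD : MapsTo f (closedBall 0 1) (closedBall 0 1)) :
    ∃ z ∈ closedBall (0 : ℂ) 1, f z = z := by
  by_contra! hfix
  obtain ⟨θ, hθc, hθ⟩ := (convex_closedBall (0 : ℂ) 1).exists_continuousOn_exp_eq
    (g := fun z => z - f z) (continuousOn_id.sub hf) fun z hz => sub_ne_zero.2 (hfix z hz).symm
  have hzz : ∀ z ∈ sphere (0 : ℂ) 1, z * conj z = 1 := fun z hz => by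
    simp [mul_conj', mem_sphere_zero_iff_norm.1 hz]
  set u : ℂ → ℂ := fun z => 1 - f z * conj z
  have hu : ∀ z ∈ sphere (0 : ℂ) 1, 0 < (u z).re := by
    intro z hz
    have hzD : z ∈ closedBall (0 : ℂ) 1 := sphere_subset_closedBall hz
    refine sub_pos.2 (re_lt_one_of_norm_le_one ?_ fun h => hfix z hzD ?_)
    · simpa [mem_sphere_zero_iff_norm.1 hz] using hfD hzD
    · linear_combination z * h - f z * hzz z hz
  refine not_exists_continuousOn_exp_eq_id_sphere one_pos
    ⟨fun z => θ z - log (u z), ?_, fun z hz => ?_⟩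
  · exact (hθc.mono sphere_subset_closedBall).sub
      ((continuousOn_const.sub ((hf.mono sphere_subset_closedBall).mul
        continuous_conj.continuousOn)).clog fun z hz => mem_slitPlane_iff.2 (Or.inl (hu z hz)))
  · have hu₀ : u z ≠ 0 := fun h => by simpa [h] using hu z hz
    rw [exp_sub, exp_log hu₀, hθ z (sphere_subset_closedBall hz), div_eq_iff hu₀]
    linear_combination f z * hzz z hz

end

theorem EuclideanSpace.exists_fixedPoint_of_mapsTo_closedBall
    {f : EuclideanSpace ℝ (Fin 2) → EuclideanSpace ℝ (Fin 2)}
    (hf : ContinuousOn f (closedBall 0 1)) (hfD : MapsTo f (closedBall 0 1) (closedBall 0 1)) :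
    ∃ x ∈ closedBall (0 : EuclideanSpace ℝ (Fin 2)) 1, f x = x := by
  set e := Complex.orthonormalBasisOneI.repr
  have he : MapsTo e (closedBall 0 1) (closedBall 0 1) := fun z hz => by simpa using hz
  have he' : MapsTo e.symm (closedBall 0 1) (closedBall 0 1) := fun x hx => by simpa using hx
  obtain ⟨z, hz, hfz⟩ := Complex.exists_fixedPoint_of_mapsTo_closedBall
    (e.symm.continuous.comp_continuousOn (hf.comp e.continuous.continuousOn he))
    (he'.comp (hfD.comp he))
  exact ⟨e z, he hz, e.symm.injective (by simpa using hfz)⟩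

theorem phiDisc_subset_sphere (x : EuclideanSpace ℝ (Fin 2)) : phiDisc x ⊆ sphere 0 1 := by
  unfold phiDisc
  split_ifs
  exacts [subset_rfl, sdiff_subset]

theorem notMem_phiDisc_self (x : EuclideanSpace ℝ (Fin 2)) : x ∉ phiDisc x := by
  intro hx
  have hx₁ : ‖x‖ = 1 := by simpa using phiDisc_subset_sphere x hx
  have hx₀ : x ≠ 0 := norm_ne_zero_iff.1 (by simp [hx₁])
  simp [phiDisc, hx₀, hx₁] at hx

/-- `φ` admits no single-valued continuous selection on the closed unit disc. -/
theorem no_continuous_selection :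
    ¬ ∃ f : EuclideanSpace ℝ (Fin 2) → EuclideanSpace ℝ (Fin 2),
      ContinuousOn f (closedBall (0 : EuclideanSpace ℝ (Fin 2)) 1) ∧
      ∀ x ∈ closedBall (0 : EuclideanSpace ℝ (Fin 2)) 1, f x ∈ phiDisc x := by
  rintro ⟨f, hf, hsel⟩
  obtain ⟨x, hx, hfx⟩ := EuclideanSpace.exists_fixedPoint_of_mapsTo_closedBall hf
    fun x hx => sphere_subset_closedBall (phiDisc_subset_sphere x (hsel x hx))
  exact notMem_phiDisc_self x (by simpa only [hfx] using hsel x hx)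
end

section
/- Let (X, μ) be a probability space and C a finite family of pairwise disjoint measurable sets. Suppose V is a measurable set that can be written as the union of at most 2^n members of a family D of measurable sets together with a μ-null set, and each member of D contains a member of C with difference of measure zero. If m > 2^n members of C with positive measure are contained in V (as the maximal ones intersecting V up to null sets), then we reach a contradiction; hence the number of positive-measure members of C contained in V is at most 2^n. -/
/-!
A positive-measure cell `c ⊆ V` must meet some `d ∈ D'` in positive measure, since `V` is
covered by `D'` up to a null set. But `d` is filled, up to a null set, by a single cell of the
disjoint family `C`, and that cell is the only member of `C` meeting `d` in positive measure.
So every such `c` is the cell attached to some `d ∈ D'`, and there are at most `#D' ≤ 2 ^ n`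
of them.
-/

open MeasureTheory

section

variable {X : Type*} [MeasurableSpace X] {μ : Measure X}

lemma exists_measure_inter_pos_of_measure_diff_sUnion_eq_zero {D : Set (Set X)}
    (hD : D.Countable) {c : Set X} (hc : 0 < μ c) (hcD : μ (c \ ⋃₀ D) = 0) :
    ∃ d ∈ D, 0 < μ (c ∩ d) := by
  by_contra! h
  have hcover : c ⊆ (c \ ⋃₀ D) ∪ ⋃ d ∈ D, c ∩ d := by
    intro x hx
    by_cases hxD : x ∈ ⋃₀ D
    · obtain ⟨d, hd, hxd⟩ := hxD
      exact Or.inr (Set.mem_biUnion hd ⟨hx, hxd⟩)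
    · exact Or.inl ⟨hx, hxD⟩
  have hnull : μ ((c \ ⋃₀ D) ∪ ⋃ d ∈ D, c ∩ d) = 0 :=
    measure_union_null hcD <|
      (measure_biUnion_null_iff hD).2 fun d hd => nonpos_iff_eq_zero.1 (h d hd)
  exact hc.ne' (measure_mono_null hcover hnull)

lemma eq_of_measure_inter_pos {C : Set (Set X)} (hC : C.PairwiseDisjoint id)
    {c c' d : Set X} (hc : c ∈ C) (hc' : c' ∈ C) (hdc' : μ (d \ c') = 0)
    (hpos : 0 < μ (c ∩ d)) : c = c' := by
  by_contra hne
  have hsub : c ∩ d ⊆ d \ c' := fun x hx =>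
    ⟨hx.2, fun hx' => Set.disjoint_left.1 (hC hc hc' hne) hx.1 hx'⟩
  exact hpos.ne' (measure_mono_null hsub hdc')

end

theorem counting_bound_general {X : Type*} [MeasurableSpace X] (μ : Measure X)
    (n : ℕ) (C D' : Finset (Set X)) (V : Set X)
    (hCdisj : ∀ c₁ ∈ C, ∀ c₂ ∈ C, c₁ ≠ c₂ → Disjoint c₁ c₂)
    (hcard : D'.card ≤ 2 ^ n)
    (hnull : μ (V \ ⋃₀ (D' : Set (Set X))) = 0)
    (hcontain : ∀ d ∈ D', ∃ c ∈ C, c ⊆ d ∧ μ (d \ c) = 0) :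
    Nat.card {c : Set X // c ∈ C ∧ 0 < μ c ∧ c ⊆ V} ≤ 2 ^ n := by
  choose! cell hcellC _ hcell_null using hcontain
  have hS : {c | c ∈ C ∧ 0 < μ c ∧ c ⊆ V} ⊆ D'.image cell := by
    rintro c ⟨hc, hpos, hcV⟩
    obtain ⟨d, hd, hcd⟩ := exists_measure_inter_pos_of_measure_diff_sUnion_eq_zero
      D'.countable_toSet hpos (measure_mono_null (Set.sdiff_subset_sdiff_left hcV) hnull)
    exact Finset.mem_image.2
      ⟨d, hd, (eq_of_measure_inter_pos hCdisj hc (hcellC d hd) (hcell_null d hd) hcd).symm⟩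
  calc Nat.card {c : Set X // c ∈ C ∧ 0 < μ c ∧ c ⊆ V}
      = Set.ncard {c | c ∈ C ∧ 0 < μ c ∧ c ⊆ V} := Nat.card_coe_set_eq _
    _ ≤ (D'.image cell).card := by
        simpa only [Set.ncard_coe_finset] using Set.ncard_le_ncard hS (Finset.finite_toSet _)
    _ ≤ D'.card := Finset.card_image_le
    _ ≤ 2 ^ n := hcard

/-- Counting step: if `V` is a union of at most `2^n` members of `D'` together with a
`μ`-null set, each member of `D'` contains a member of the pairwise disjoint family `C`
with difference of measure zero, then at most `2^n` positive-measure members of `C`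
are contained in `V`. -/
theorem counting_bound {X : Type*} [MeasurableSpace X] (μ : Measure X)
    [IsProbabilityMeasure μ] (n : ℕ) (C D' : Finset (Set X)) (V : Set X)
    (hCmeas : ∀ c ∈ C, MeasurableSet c)
    (hDmeas : ∀ d ∈ D', MeasurableSet d)
    (hVmeas : MeasurableSet V)
    (hCdisj : ∀ c₁ ∈ C, ∀ c₂ ∈ C, c₁ ≠ c₂ → Disjoint c₁ c₂)
    (hcard : D'.card ≤ 2 ^ n)
    (hsub : ⋃₀ (D' : Set (Set X)) ⊆ V)
    (hnull : μ (V \ ⋃₀ (D' : Set (Set X))) = 0)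
    (hcontain : ∀ d ∈ D', ∃ c ∈ C, c ⊆ d ∧ μ (d \ c) = 0) :
    Nat.card {c : Set X // c ∈ C ∧ 0 < μ c ∧ c ⊆ V} ≤ 2 ^ n :=
  counting_bound_general μ n C D' V hCdisj hcard hnull hcontain
end
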